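/- Let k ≥ 2, n = 2k, and r ≥ 1. The monomial f_3 = (x_1 x_2 ⋯ x_{2k})^r belongs to I_{B_{2k}}^{(2r(k−1))}; in particular, since deg(f_3) = 2rk = α_{2k, 2r(k−1)}, when s = 2r is even f_3 is a generator of minimal degree of I_{B_{2k}}^{(s(k−1))} distinct from (x_1 x_3 ⋯ x_{2k−1})^s and (x_2 x_4 ⋯ x_{2k})^s. -/

import Mathlib

open MvPolynomial

open Fin.NatCast in
/-- The subtree (arc) of `n-2` consecutive cycle vertices of the `n`-cycle `Q_n`
(on vertices `1,…,n` inside `Fin (n+2)`), starting at vertex `i+1`, for `i = 0,…,n-1`.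
The family `arcT n i`, `i < n`, is exactly the family `𝒯` of subtrees of `Q_n`
with `n-2` vertices. -/
def arcT (n i : ℕ) : Finset (Fin (n + 2)) :=
  (Finset.range (n - 2)).image fun t => (((i + t) % n + 1 : ℕ) : Fin (n + 2))

/-- The monomial prime ideal `⟨x_v⟩ + ⟨x_j : j ∈ S⟩`. -/
noncomputable def apexIdeal (K : Type*) [Field K] (n : ℕ) (v : Fin (n + 2))
    (S : Finset (Fin (n + 2))) : Ideal (MvPolynomial (Fin (n + 2)) K) :=
  Ideal.span (insert (X v) (X '' (S : Set (Fin (n+2))) : Set (MvPolynomial (Fin (n + 2)) K)))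

open Fin.NatCast in
/-- The `m`-th symbolic power `I_{B_n}^{(m)} = ⋂_{S ∈ 𝒯} (I_{[0,S]}^m ∩ I_{[n+1,S]}^m)`. -/
noncomputable def symbPow (K : Type*) [Field K] (n m : ℕ) : Ideal (MvPolynomial (Fin (n + 2)) K) :=
  ⨅ i ∈ Finset.range n,
    apexIdeal K n 0 (arcT n i) ^ m ⊓ apexIdeal K n ((n + 1 : ℕ) : Fin (n + 2)) (arcT n i) ^ m

/-- The monomial `x_0^{a_0} x_1^{a_1} ⋯ x_{n+1}^{a_{n+1}}`. -/
noncomputable def monom (K : Type*) [Field K] (n : ℕ) (a : Fin (n + 2) → ℕ) :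
    MvPolynomial (Fin (n + 2)) K :=
  ∏ i, X i ^ a i

/-- `α_{n,m}`: the least total degree of a monomial lying in `I_{B_n}^{(m)}`. -/
noncomputable def alphaSymb (K : Type*) [Field K] (n m : ℕ) : ℕ :=
  sInf {d | ∃ a : Fin (n + 2) → ℕ, (∑ i, a i) = d ∧ monom K n a ∈ symbPow K n m}

open Fin.NatCast in
/-- The Stanley–Reisner ideal `I_{B_n}` of the bipyramid `B_n`, presented by its
quadratic generators: `x_0 x_{n+1}` together with `x_i x_j` for non-adjacent
vertices `i, j` of the cycle `Q_n`. -/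
noncomputable def bipyrIdeal (K : Type*) [Field K] (n : ℕ) : Ideal (MvPolynomial (Fin (n + 2)) K) :=
  Ideal.span ({X (0 : Fin (n + 2)) * X ((n + 1 : ℕ) : Fin (n + 2))} ∪
    {p | ∃ i j : ℕ, 1 ≤ i ∧ i ≤ n ∧ 1 ≤ j ∧ j ≤ n ∧ i ≠ j ∧
      j ≠ i % n + 1 ∧ i ≠ j % n + 1 ∧
      p = X ((i : ℕ) : Fin (n + 2)) * X ((j : ℕ) : Fin (n + 2))})

/-! A monomial `x^a` lies in the `m`-th power of the monomial prime `⟨x_j : j ∈ T⟩` iff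
`∑_{j ∈ T} a_j ≥ m`, so membership in `I_{B_n}^{(m)}` is a system of linear inequalities, two
for each arc. The monomial `(x_1 ⋯ x_n)^r` gives `(n - 2) r` in each of them. Conversely, summing
the inequalities of one apex over the `n` rotations of the arc counts every cycle vertex `n - 2`
times; adding the two resulting bounds and using `n ≤ 2 (n - 2)` for `n ≥ 4` shows that every
monomial of `I_{B_n}^{(m)}` has degree at least `n m / (n - 2)`, which is `2 r k` for `n = 2 k`,
`m = 2 r (k - 1)`. -/

open Finset Fin.NatCast

section MonomialIdeal

variable {σ R : Type*} [Fintype σ] [CommRing R]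

theorem prod_X_pow_mem_span_X_image_pow_of_le (T : Finset σ) {m : ℕ} {a : σ → ℕ}
    (h : m ≤ ∑ j ∈ T, a j) :
    (∏ i, X i ^ a i : MvPolynomial σ R) ∈ Ideal.span (X '' (T : Set σ)) ^ m := by
  have hT : (∏ j ∈ T, X j ^ a j : MvPolynomial σ R) ∈
      Ideal.span (X '' (T : Set σ)) ^ ∑ j ∈ T, a j := by
    rw [← Finset.prod_pow_eq_pow_sum]
    exact Ideal.prod_mem_prod fun j hj =>
      Ideal.pow_mem_pow (Ideal.subset_span (Set.mem_image_of_mem X hj)) _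
  classical
  rw [← Finset.prod_mul_prod_compl T]
  exact Ideal.mul_mem_right _ _ (Ideal.pow_le_pow_right h hT)

theorem le_sum_of_prod_X_pow_mem_span_X_image_pow [Nontrivial R] (T : Finset σ) {m : ℕ}
    {a : σ → ℕ} (h : (∏ i, X i ^ a i : MvPolynomial σ R) ∈ Ideal.span (X '' (T : Set σ)) ^ m) :
    m ≤ ∑ j ∈ T, a j := by
  classical
  let φ : MvPolynomial σ R →ₐ[R] Polynomial R :=
    aeval fun i => if i ∈ T then Polynomial.X else 1
  have hspan : Ideal.map φ (Ideal.span (X '' (T : Set σ))) ≤ Ideal.span {Polynomial.X} := by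
    rw [Ideal.map_span, Ideal.span_le]
    rintro _ ⟨_, ⟨i, hi, rfl⟩, rfl⟩
    simp [φ, Finset.mem_coe.mp hi]
  have hφ : φ (∏ i, X i ^ a i) = Polynomial.X ^ ∑ j ∈ T, a j := by
    simp [φ, map_prod, ite_pow, Finset.prod_ite_mem, Finset.prod_pow_eq_pow_sum]
  have hmem : φ (∏ i, X i ^ a i) ∈ Ideal.span {Polynomial.X ^ m} := by
    rw [← Ideal.span_singleton_pow]
    exact Ideal.pow_right_mono hspan m (Ideal.map_pow φ _ m ▸ Ideal.mem_map_of_mem φ h)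
  rw [hφ, Ideal.mem_span_singleton, Polynomial.X_pow_dvd_iff] at hmem
  by_contra! hlt
  simpa using hmem _ hlt

theorem prod_X_pow_mem_span_X_image_pow_iff [Nontrivial R] (T : Finset σ) (m : ℕ) (a : σ → ℕ) :
    (∏ i, X i ^ a i : MvPolynomial σ R) ∈ Ideal.span (X '' (T : Set σ)) ^ m ↔
      m ≤ ∑ j ∈ T, a j :=
  ⟨le_sum_of_prod_X_pow_mem_span_X_image_pow T, prod_X_pow_mem_span_X_image_pow_of_le T⟩

end MonomialIdeal

theorem monom_mem_apexIdeal_pow_iff {K : Type*} [Field K] {n : ℕ} {v : Fin (n + 2)}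
    {S : Finset (Fin (n + 2))} (hv : v ∉ S) (m : ℕ) (a : Fin (n + 2) → ℕ) :
    monom K n a ∈ apexIdeal K n v S ^ m ↔ m ≤ a v + ∑ j ∈ S, a j := by
  rw [apexIdeal, ← Set.image_insert_eq, ← Finset.coe_insert, monom,
    prod_X_pow_mem_span_X_image_pow_iff, Finset.sum_insert hv]

theorem monom_injective (K : Type*) [Field K] (n : ℕ) : Function.Injective (monom K n) := by
  intro a b h
  simp only [monom, prod_X_pow] at h
  ext v
  simpa using DFunLike.congr_fun (monomial_left_injective one_ne_zero h) v

theorem Function.Periodic.sum_range_add {M : Type*} [AddCancelCommMonoid M] {g : ℕ → M}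
    {n : ℕ} (hg : Function.Periodic g n) (t : ℕ) :
    ∑ i ∈ range n, g (i + t) = ∑ i ∈ range n, g i := by
  induction t with
  | zero => simp
  | succ t ih =>
    have hshift : ∑ i ∈ range n, g (i + 1 + t) + g t = ∑ i ∈ range n, g (i + t) + g t := by
      have h := (Finset.sum_range_succ' (fun i => g (i + t)) n).symm.trans
        (Finset.sum_range_succ (fun i => g (i + t)) n)
      rwa [zero_add, add_comm n t, hg t] at h
    calc ∑ i ∈ range n, g (i + (t + 1)) = ∑ i ∈ range n, g (i + 1 + t) := by
          simp only [← add_assoc, add_right_comm _ t 1]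
      _ = ∑ i ∈ range n, g (i + t) := add_right_cancel hshift
      _ = ∑ i ∈ range n, g i := ih

theorem Function.Periodic.sum_range_sum_range_add {M : Type*} [AddCancelCommMonoid M]
    {g : ℕ → M} {n : ℕ} (hg : Function.Periodic g n) (l : ℕ) :
    ∑ i ∈ range n, ∑ t ∈ range l, g (i + t) = l • ∑ i ∈ range n, g i := by
  rw [Finset.sum_comm]
  simp only [hg.sum_range_add, Finset.sum_const, Finset.card_range]

def cycleVertex (n j : ℕ) : Fin (n + 2) := ((j % n + 1 : ℕ) : Fin (n + 2))

theorem cycleVertex_periodic (n : ℕ) : Function.Periodic (cycleVertex n) n := by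
  intro j
  simp [cycleVertex]

theorem val_cycleVertex {n : ℕ} (hn : 0 < n) (j : ℕ) : (cycleVertex n j : ℕ) = j % n + 1 :=
  Fin.val_cast_of_lt (by have := Nat.mod_lt j hn; omega)

theorem arcT_eq_image (n i : ℕ) :
    arcT n i = (range (n - 2)).image fun t => cycleVertex n (i + t) := rfl

theorem zero_notMem_arcT (n i : ℕ) : (0 : Fin (n + 2)) ∉ arcT n i := by
  simp only [arcT_eq_image, mem_image, mem_range, not_exists, not_and]
  intro t ht h
  have := congrArg Fin.val h
  rw [val_cycleVertex (by omega)] at this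
  simp at this

theorem last_notMem_arcT (n i : ℕ) : Fin.last (n + 1) ∉ arcT n i := by
  simp only [arcT_eq_image, mem_image, mem_range, not_exists, not_and]
  intro t ht h
  have := congrArg Fin.val h
  rw [val_cycleVertex (by omega), Fin.val_last] at this
  have := Nat.mod_lt (i + t) (by omega : 0 < n)
  omega

theorem sum_arcT {M : Type*} [AddCommMonoid M] (n i : ℕ) (a : Fin (n + 2) → M) :
    ∑ j ∈ arcT n i, a j = ∑ t ∈ range (n - 2), a (cycleVertex n (i + t)) := by
  refine Finset.sum_image fun t₁ h₁ t₂ h₂ h => ?_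
  simp only [coe_range, Set.mem_Iio] at h₁ h₂
  have h' : (cycleVertex n (i + t₁) : ℕ) = cycleVertex n (i + t₂) := congrArg Fin.val h
  rw [val_cycleVertex (by omega), val_cycleVertex (by omega)] at h'
  have := Nat.ModEq.add_left_cancel' i (Nat.succ_injective h')
  rwa [Nat.ModEq, Nat.mod_eq_of_lt (by omega : t₁ < n), Nat.mod_eq_of_lt (by omega : t₂ < n)]
    at this

theorem sum_univ_eq_add_sum_cycleVertex {M : Type*} [AddCommMonoid M] {n : ℕ} (hn : 0 < n)
    (a : Fin (n + 2) → M) :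
    ∑ j, a j = a 0 + a (Fin.last (n + 1)) + ∑ v ∈ range n, a (cycleVertex n v) := by
  have hv : ∀ v : Fin n, cycleVertex n v = v.castSucc.succ := fun v =>
    Fin.ext (by simp [val_cycleVertex hn, Nat.mod_eq_of_lt v.2])
  rw [Fin.sum_univ_succ, Fin.sum_univ_castSucc,
    ← Fin.sum_univ_eq_sum_range (fun v => a (cycleVertex n v))]
  simp only [hv, Fin.succ_last]
  abel

theorem monom_mem_symbPow_iff {K : Type*} [Field K] {n m : ℕ} {a : Fin (n + 2) → ℕ} :
    monom K n a ∈ symbPow K n m ↔ ∀ i < n,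
      m ≤ a 0 + ∑ t ∈ range (n - 2), a (cycleVertex n (i + t)) ∧
      m ≤ a (Fin.last (n + 1)) + ∑ t ∈ range (n - 2), a (cycleVertex n (i + t)) := by
  simp only [symbPow, Fin.natCast_eq_last, Submodule.mem_iInf, Submodule.mem_inf, mem_range]
  refine forall₂_congr fun i _ => ?_
  rw [monom_mem_apexIdeal_pow_iff (zero_notMem_arcT n i),
    monom_mem_apexIdeal_pow_iff (last_notMem_arcT n i), sum_arcT]

theorem mul_le_mul_sum_of_monom_mem_symbPow {K : Type*} [Field K] {n m : ℕ} (hn : 4 ≤ n)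
    {a : Fin (n + 2) → ℕ} (h : monom K n a ∈ symbPow K n m) :
    n * m ≤ (n - 2) * ∑ j, a j := by
  rw [sum_univ_eq_add_sum_cycleVertex (by omega)]
  set C := ∑ v ∈ range n, a (cycleVertex n v)
  have hC : ∑ i ∈ range n, ∑ t ∈ range (n - 2), a (cycleVertex n (i + t)) = (n - 2) * C :=
    ((cycleVertex_periodic n).comp a).sum_range_sum_range_add (n - 2)
  rw [monom_mem_symbPow_iff] at h
  have h₀ : n * m ≤ n * a 0 + (n - 2) * C := by
    simpa [Finset.sum_add_distrib, hC] using
      Finset.sum_le_sum fun i hi => (h i (mem_range.mp hi)).1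
  have h₁ : n * m ≤ n * a (Fin.last (n + 1)) + (n - 2) * C := by
    simpa [Finset.sum_add_distrib, hC] using
      Finset.sum_le_sum fun i hi => (h i (mem_range.mp hi)).2
  obtain ⟨p, rfl⟩ : ∃ p, n = p + 4 := ⟨n - 4, by omega⟩
  rw [show p + 4 - 2 = p + 2 by omega] at *
  nlinarith

def cycleExp (n r : ℕ) (j : Fin (n + 2)) : ℕ := if 1 ≤ (j : ℕ) ∧ (j : ℕ) ≤ n then r else 0

theorem cycleExp_cycleVertex {n : ℕ} (hn : 0 < n) (r j : ℕ) :
    cycleExp n r (cycleVertex n j) = r := by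
  have := Nat.mod_lt j hn
  rw [cycleExp, val_cycleVertex hn, if_pos (by omega)]

theorem sum_cycleExp {n : ℕ} (hn : 0 < n) (r : ℕ) : ∑ j, cycleExp n r j = n * r := by
  simp only [sum_univ_eq_add_sum_cycleVertex hn, cycleExp_cycleVertex hn]
  simp [cycleExp]

theorem monom_cycleExp_mem_symbPow (K : Type*) [Field K] {n m r : ℕ} (h : m ≤ (n - 2) * r) :
    monom K n (cycleExp n r) ∈ symbPow K n m := by
  refine monom_mem_symbPow_iff.mpr fun i hi => ?_
  simp only [cycleExp_cycleVertex (by omega : 0 < n)]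
  simpa [cycleExp] using h

/-- For `k ≥ 2`, `n = 2k` and `r ≥ 1`, the monomial `f₃ = (x_1 x_2 ⋯ x_{2k})^r` lies in
`I_{B_{2k}}^{(2r(k-1))}`; its degree is `2rk = α_{2k, 2r(k-1)}`, so for even `s = 2r` it
is a minimal-degree generator of `I_{B_{2k}}^{(s(k-1))}` distinct from
`(x_1 x_3 ⋯ x_{2k-1})^s` and `(x_2 x_4 ⋯ x_{2k})^s`. -/
theorem even_case_third_minimal_generator (K : Type*) [Field K] (k r : ℕ)
    (hk : 2 ≤ k) (hr : 1 ≤ r) :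
    (monom K (2 * k) (fun j => if 1 ≤ (j : ℕ) ∧ (j : ℕ) ≤ 2 * k then r else 0)
        ∈ symbPow K (2 * k) (2 * r * (k - 1))) ∧
    (∑ i : Fin (2 * k + 2), (if 1 ≤ (i : ℕ) ∧ (i : ℕ) ≤ 2 * k then r else 0)) = 2 * r * k ∧
    alphaSymb K (2 * k) (2 * r * (k - 1)) = 2 * r * k ∧
    monom K (2 * k) (fun j => if 1 ≤ (j : ℕ) ∧ (j : ℕ) ≤ 2 * k then r else 0) ≠
      monom K (2 * k) (fun j => if (j : ℕ) % 2 = 1 ∧ (j : ℕ) ≤ 2 * k then 2 * r else 0) ∧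
    monom K (2 * k) (fun j => if 1 ≤ (j : ℕ) ∧ (j : ℕ) ≤ 2 * k then r else 0) ≠
      monom K (2 * k)
        (fun j => if (j : ℕ) % 2 = 0 ∧ 1 ≤ (j : ℕ) ∧ (j : ℕ) ≤ 2 * k then 2 * r else 0) := by
  have hmem : monom K (2 * k) (cycleExp (2 * k) r) ∈ symbPow K (2 * k) (2 * r * (k - 1)) :=
    monom_cycleExp_mem_symbPow K
      (le_of_eq (by rw [show 2 * k - 2 = 2 * (k - 1) by omega]; ring))
  have hdeg : ∑ j, cycleExp (2 * k) r j = 2 * r * k := by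
    rw [sum_cycleExp (by omega)]
    ring
  refine ⟨hmem, hdeg, IsLeast.csInf_eq ⟨⟨_, hdeg, hmem⟩, ?_⟩, ?_, ?_⟩
  · rintro _ ⟨a, rfl, ha⟩
    have hbound := mul_le_mul_sum_of_monom_mem_symbPow (by omega) ha
    rw [show 2 * k - 2 = 2 * (k - 1) by omega,
      show 2 * k * (2 * r * (k - 1)) = 2 * (k - 1) * (2 * r * k) by ring] at hbound
    exact Nat.le_of_mul_le_mul_left hbound (by omega)
  · refine (monom_injective K _).ne (Function.ne_iff.mpr ⟨1, ?_⟩)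
    simpa [show 1 ≤ 2 * k by omega] using (by omega : r ≠ 2 * r)
  · refine (monom_injective K _).ne (Function.ne_iff.mpr ⟨1, ?_⟩)
    simpa [show 1 ≤ 2 * k by omega] using (by omega : r ≠ 0)
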